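/- Let L be the first-order language with one binary function symbol, one constant symbol, and one unary relation symbol, and let A ⊆ ℕ. Make ℤ an L-structure by interpreting the binary function as addition, the constant as 0, and the unary relation as the set A (viewed as a subset of ℤ). If the set {x ∈ ℤ : x ≥ 0} is not a definable subset of ℤ with parameters from ℤ in this structure, then A is δ̲-sparse: for every n ≥ 1, the lower asymptotic density of Σ_n(A) is 0. -/

import Mathlib

/-
If `Σ_n(A)` had positive lower density, then `D = Σ_n(A) ∪ {0, 1}` would have positive
Schnirelmann density, so by Schnirelmann's theorem `k • D = ℕ` for some `k`. But `D` is
definable in `(ℤ, +, 0, A)`, being a finite union of iterated sumsets of `A` and two constants,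
hence so is `k • D`, which is the set of non-negative integers.
-/

open Filter

/-- The `k`-fold sumset `X + ⋯ + X` (`k` times) of a set of naturals. -/
def kFoldN (X : Set ℕ) (k : ℕ) : Set ℕ :=
  {z : ℕ | ∃ f : Fin k → ℕ, (∀ i, f i ∈ X) ∧ z = ∑ i, f i}

/-- `Σ_n(X) = ⋃_{k=1}^n k(X)` for `X ⊆ ℕ`. -/
def sigmaSumN (n : ℕ) (X : Set ℕ) : Set ℕ :=
  ⋃ k ∈ Finset.Icc 1 n, kFoldN X k

/-- The lower asymptotic density of a set of naturals:
`liminf_{n → ∞} |A ∩ {1,…,n}| / n`. -/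
noncomputable def lowerDensity (A : Set ℕ) : ℝ :=
  Filter.liminf (fun n : ℕ => (Set.ncard (A ∩ Set.Icc 1 n) : ℝ) / n) Filter.atTop

/-- The language with one binary function symbol, one constant symbol, and one unary
relation symbol. -/
def LZA : FirstOrder.Language where
  Functions := fun n => match n with
    | 0 => Unit
    | 2 => Unit
    | _ => Empty
  Relations := fun n => match n with
    | 1 => Unit
    | _ => Empty

/-- The `LZA`-structure on `ℤ` interpreting the binary function as `+`, the constant as `0`,
and the unary relation as `A ⊆ ℕ` viewed as a subset of `ℤ`. -/
def zStructure (A : Set ℕ) : LZA.Structure ℤ where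
  funMap {n} f x :=
    match n, f, x with
    | 0, _, _ => 0
    | 2, _, x => x 0 + x 1
  RelMap {n} r x :=
    match n, r, x with
    | 1, _, x => ∃ m ∈ A, (m : ℤ) = x 0

open Finset Pointwise FirstOrder Language

namespace Finset

lemma card_filter_Ioc_add_card_filter_Ioc {p : ℕ → Prop} [DecidablePred p] {a b c : ℕ}
    (hab : a ≤ b) (hbc : b ≤ c) :
    #{x ∈ Ioc a b | p x} + #{x ∈ Ioc b c | p x} = #{x ∈ Ioc a c | p x} := by
  rw [← card_union_of_disjoint (disjoint_filter_filter (Ioc_disjoint_Ioc_of_le le_rfl)),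
    ← filter_union, Ioc_union_Ioc_eq_Ioc hab hbc]

end Finset

section Schnirelmann

lemma card_filter_Ioc_le_card_filter_Ioc_add {X Y : Set ℕ} [DecidablePred (· ∈ Y)]
    [DecidablePred (· ∈ X + Y)] {x : ℕ} (hx : x ∈ X) (n : ℕ) :
    #{a ∈ Ioc 0 n | a ∈ Y} ≤ #{a ∈ Ioc x (x + n) | a ∈ X + Y} := by
  refine card_le_card_of_injOn (x + ·) (fun a ha => ?_) (add_right_injective x).injOn
  simp only [coe_filter, mem_Ioc, Set.mem_ofPred_eq] at ha ⊢
  exact ⟨by omega, Set.add_mem_add hx ha.2⟩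

variable {X Y : Set ℕ} [DecidablePred (· ∈ X)] [DecidablePred (· ∈ Y)]

/-- The gap argument behind Schnirelmann's inequality: in each gap `(x, n]` of `X`, the set
`X + Y` contains the translate `x + (Y ∩ (0, n - x])`. -/
lemma sub_card_filter_add_le (hX : 0 ∈ X) (hY : 0 ∈ Y) [DecidablePred (· ∈ X + Y)]
    (n : ℕ) :
    (n : ℝ) - #{a ∈ Ioc 0 n | a ∈ X + Y} ≤
      (1 - schnirelmannDensity Y) * (n - #{a ∈ Ioc 0 n | a ∈ X}) := by
  induction n using Nat.strong_induction_on with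
  | _ n ih =>
  rcases n with _ | m
  · simp
  by_cases hnX : m + 1 ∈ X
  · have hXY : m + 1 ∈ X + Y := ⟨m + 1, hnX, 0, hY, rfl⟩
    have hXsplit := card_filter_Ioc_add_card_filter_Ioc (p := (· ∈ X)) m.zero_le m.le_succ
    have hXYsplit := card_filter_Ioc_add_card_filter_Ioc (p := (· ∈ X + Y)) m.zero_le m.le_succ
    simp only [Nat.Ioc_succ_singleton, filter_singleton, hnX, hXY, if_true, card_singleton]
      at hXsplit hXYsplit
    have hprev := ih m m.lt_succ_self
    rw [← hXsplit, ← hXYsplit]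
    push_cast
    linarith
  set x := Nat.findGreatest (· ∈ X) (m + 1)
  have hxX : x ∈ X := Nat.findGreatest_spec (Nat.zero_le _) hX
  have hxn : x < m + 1 := (Nat.findGreatest_le _).lt_of_ne fun h => hnX (h ▸ hxX)
  have hgap : #{a ∈ Ioc x (m + 1) | a ∈ X} = 0 := by
    rw [card_eq_zero, filter_eq_empty_iff]
    intro a ha
    rw [mem_Ioc] at ha
    exact Nat.findGreatest_is_greatest ha.1 ha.2
  obtain ⟨g, hg⟩ : ∃ g, m + 1 = x + g := ⟨m + 1 - x, by omega⟩
  have hXsplit := card_filter_Ioc_add_card_filter_Ioc (p := (· ∈ X)) x.zero_le hxn.le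
  have hXYsplit := card_filter_Ioc_add_card_filter_Ioc (p := (· ∈ X + Y)) x.zero_le hxn.le
  have hshift := card_filter_Ioc_le_card_filter_Ioc_add (Y := Y) hxX g
  have hdens : schnirelmannDensity Y * g ≤ #{a ∈ Ioc 0 g | a ∈ Y} :=
    schnirelmannDensity_mul_le_card_filter
  have hprev := ih x hxn
  rw [← hg] at hshift
  rw [← hXsplit, ← hXYsplit, hgap]
  have hshift' : (#{a ∈ Ioc 0 g | a ∈ Y} : ℝ) ≤ #{a ∈ Ioc x (m + 1) | a ∈ X + Y} := by
    exact_mod_cast hshift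
  have hg' : ((m + 1 : ℕ) : ℝ) = x + g := by exact_mod_cast hg
  rw [hg']
  push_cast
  linarith

/-- Schnirelmann's inequality. -/
theorem schnirelmannDensity_add_sub_mul_le (hX : 0 ∈ X) (hY : 0 ∈ Y)
    [DecidablePred (· ∈ X + Y)] :
    schnirelmannDensity X + schnirelmannDensity Y - schnirelmannDensity X * schnirelmannDensity Y
      ≤ schnirelmannDensity (X + Y) := by
  rw [le_schnirelmannDensity_iff]
  intro n hn
  rw [le_div_iff₀ (by exact_mod_cast hn)]
  have hstep := sub_card_filter_add_le hX hY n
  have hXn : schnirelmannDensity X * n ≤ #{a ∈ Ioc 0 n | a ∈ X} :=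
    schnirelmannDensity_mul_le_card_filter
  have hYle : 0 ≤ 1 - schnirelmannDensity Y := sub_nonneg.2 schnirelmannDensity_le_one
  nlinarith

open scoped Classical in
lemma one_sub_schnirelmannDensity_nsmul_le (hX : 0 ∈ X) (k : ℕ) :
    1 - schnirelmannDensity (k • X) ≤ (1 - schnirelmannDensity X) ^ k := by
  induction k with
  | zero =>
    rw [schnirelmannDensity_eq_zero_of_one_notMem (by simp)]
    simp
  | succ k ih =>
    rw [schnirelmannDensity_congr (succ_nsmul X k), pow_succ]
    have hadd := schnirelmannDensity_add_sub_mul_le (Set.zero_mem_nsmul (n := k) hX) hX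
    have hX1 : 0 ≤ 1 - schnirelmannDensity X := sub_nonneg.2 schnirelmannDensity_le_one
    nlinarith [ih]

/-- Schnirelmann's theorem. -/
theorem exists_nsmul_eq_univ_of_schnirelmannDensity_pos (hX : 0 ∈ X)
    (hpos : 0 < schnirelmannDensity X) : ∃ k : ℕ, k • X = Set.univ := by
  classical
  obtain ⟨k, hk⟩ := exists_pow_lt_of_lt_one (by norm_num : (0 : ℝ) < 1 / 2)
    (by linarith : 1 - schnirelmannDensity X < 1)
  have hhalf := (one_sub_schnirelmannDensity_nsmul_le hX k).trans hk.le
  refine ⟨k + k, ?_⟩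
  rw [add_nsmul]
  exact add_eq_univ_of_one_le_schirelmannDensity_add_schnirelmannDensity
    (Set.zero_mem_nsmul hX) (Set.zero_mem_nsmul hX) (by linarith)

end Schnirelmann

lemma ncard_inter_Icc_one_eq_card_filter (C : Set ℕ) [DecidablePred (· ∈ C)] (n : ℕ) :
    (C ∩ Set.Icc 1 n).ncard = #{a ∈ Ioc 0 n | a ∈ C} := by
  rw [← Set.ncard_coe_finset]
  congr 1
  ext a
  simp only [Set.mem_inter_iff, Set.mem_Icc, coe_filter, mem_Ioc, Set.mem_ofPred_eq]
  tauto

lemma lowerDensity_nonneg (C : Set ℕ) : 0 ≤ lowerDensity C := by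
  refine le_liminf_of_le (isBoundedUnder_of ⟨1, fun n => ?_⟩).isCoboundedUnder_ge
    (Eventually.of_forall fun n => by positivity)
  rcases n.eq_zero_or_pos with rfl | hn
  · simp
  rw [div_le_one (by exact_mod_cast hn)]
  exact_mod_cast (Set.ncard_le_ncard Set.inter_subset_right (Set.finite_Icc 1 n)).trans
    (by simp)

/-- Positive lower density bounds `#(D ∩ [1, n]) / n` from below for large `n`, and `1 ∈ D`
does so for the finitely many small `n`. -/
theorem schnirelmannDensity_pos_of_lowerDensity_pos {C D : Set ℕ} [DecidablePred (· ∈ D)]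
    (hCD : C ⊆ D) (hD : 1 ∈ D) (hC : 0 < lowerDensity C) : 0 < schnirelmannDensity D := by
  classical
  obtain ⟨N, hN⟩ := eventually_atTop.1 <| eventually_lt_of_lt_liminf (half_lt_self hC)
    (isBoundedUnder_of ⟨0, fun n => by positivity⟩)
  set c := min (lowerDensity C / 2) (1 / (N + 1))
  have hc : 0 < c := lt_min (by positivity) (by positivity)
  refine hc.trans_le (le_schnirelmannDensity_iff.2 fun n hn => ?_)
  rcases le_or_gt N n with hNn | hnN
  · refine (min_le_left _ _).trans ((hN n hNn).le.trans ?_)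
    rw [ncard_inter_Icc_one_eq_card_filter]
    gcongr
  · have h1 : 1 ≤ #{a ∈ Ioc 0 n | a ∈ D} :=
      card_pos.2 ⟨1, by simpa [hD] using Nat.one_le_iff_ne_zero.2 hn.ne'⟩
    refine (min_le_right _ _).trans ?_
    rw [div_le_div_iff₀ (by positivity) (by exact_mod_cast hn)]
    have : (n : ℝ) ≤ N + 1 := by exact_mod_cast (by omega : n ≤ N + 1)
    have h1' : (1 : ℝ) ≤ #{a ∈ Ioc 0 n | a ∈ D} := by exact_mod_cast h1
    nlinarith

namespace Set

variable {M : Type*} {L : Language} [L.Structure M] {B : Set M} {S T : Set M}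

lemma Definable₁.union (hS : B.Definable₁ L S) (hT : B.Definable₁ L T) :
    B.Definable₁ L (S ∪ T) :=
  Definable.union hS hT

lemma Definable₁.insert {a : M} (ha : a ∈ B) (hS : B.Definable₁ L S) :
    B.Definable₁ L (insert a S) :=
  (Definable.singleton_of_mem L ha).union hS

lemma definable₁_biUnion_finset {ι : Type*} {f : ι → Set M}
    (hf : ∀ i, B.Definable₁ L (f i)) (s : Finset ι) : B.Definable₁ L (⋃ i ∈ s, f i) := by
  unfold Definable₁
  convert definable_biUnion_finset hf s using 1
  ext x
  simp

lemma Definable₁.add [Add M] (hadd : B.DefinableFun L fun x : Fin 2 → M => x 0 + x 1)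
    (hS : B.Definable₁ L S) (hT : B.Definable₁ L T) : B.Definable₁ L (S + T) := by
  have hsum : B.DefinableFun L fun w : Fin 3 → M => w 1 + w 2 :=
    DefinableFun.comp (g := fun w : Fin 3 → M => ![w 1, w 2])
      (by intro i; fin_cases i <;> simpa using DefinableFun.proj L) hadd
  have hgraph := ((DefinableFun.proj L (i := 0)).ofPred_eq hsum).inter
    ((hS.preimage_comp fun _ => 1).inter (hT.preimage_comp fun _ => 2))
  unfold Definable₁
  convert hgraph.image_comp fun _ : Fin 1 => (0 : Fin 3) using 1
  ext v
  constructor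
  · rintro ⟨a, ha, b, hb, hab⟩
    exact ⟨![v 0, a, b], ⟨hab.symm, ha, hb⟩, funext fun i => by fin_cases i; rfl⟩
  · rintro ⟨w, ⟨hw, ha, hb⟩, rfl⟩
    exact ⟨w 1, ha, w 2, hb, hw.symm⟩

lemma Definable₁.nsmul [AddMonoid M] (hadd : B.DefinableFun L fun x : Fin 2 → M => x 0 + x 1)
    (h0 : (0 : M) ∈ B) (hS : B.Definable₁ L S) (k : ℕ) : B.Definable₁ L (k • S) := by
  induction k with
  | zero => exact zero_nsmul S ▸ Definable.singleton_of_mem L h0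
  | succ k ih => simpa [succ_nsmul] using ih.add hadd hS

end Set

lemma kFoldN_eq_nsmul (X : Set ℕ) (k : ℕ) : kFoldN X k = k • X := by
  ext z
  simp only [kFoldN, Set.mem_nsmul_iff_sum, Set.mem_ofPred_eq, eq_comm]

lemma natCast_image_sigmaSumN (X : Set ℕ) (n : ℕ) :
    ((↑) '' sigmaSumN n X : Set ℤ) = ⋃ k ∈ Finset.Icc 1 n, k • ((↑) '' X) := by
  simp only [sigmaSumN, Set.image_iUnion₂, kFoldN_eq_nsmul]
  exact Set.iUnion₂_congr fun k _ => Set.image_nsmul (Nat.castAddMonoidHom ℤ) X k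

lemma zStructure_definableFun_add (A : Set ℕ) :
    @Set.DefinableFun ℤ LZA (zStructure A) (Fin 2) Set.univ fun x => x 0 + x 1 :=
  let _ := zStructure A
  (Set.DefinableFun.fun_symbol (L := LZA) (n := 2) ()).of_empty

lemma zStructure_definable₁_natCast_image (A : Set ℕ) :
    @Set.Definable₁ ℤ Set.univ LZA (zStructure A) ((↑) '' A) := by
  let _ := zStructure A
  rw [Set.Definable₁, Set.definable_iff_exists_formula_sum]
  refine ⟨Relations.formula₁ (L := LZA) () (Term.var (Sum.inr 0)), ?_⟩
  ext v
  exact Iff.rfl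

lemma zStructure_definable₁_natCast_image_sigmaSumN (A : Set ℕ) (n : ℕ) :
    @Set.Definable₁ ℤ Set.univ LZA (zStructure A) ((↑) '' sigmaSumN n A) := by
  let _ := zStructure A
  rw [natCast_image_sigmaSumN]
  exact Set.definable₁_biUnion_finset (fun k => (zStructure_definable₁_natCast_image A).nsmul
    (zStructure_definableFun_add A) (Set.mem_univ 0) k) _

/-- If `{x ∈ ℤ : x ≥ 0}` is not definable with parameters in the structure
`(ℤ, +, 0, A)`, then `A` is `δ̲`-sparse: every `Σ_n(A)` has lower asymptotic density `0`. -/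
theorem lowerDensity_sparse_of_not_definable_nonneg (A : Set ℕ)
    (h : ¬ @Set.Definable₁ ℤ (Set.univ : Set ℤ) LZA (zStructure A) {x : ℤ | 0 ≤ x}) :
    ∀ n : ℕ, 1 ≤ n → lowerDensity (sigmaSumN n A) = 0 := by
  classical
  intro n _
  by_contra hne
  set D := insert 0 (insert 1 (sigmaSumN n A))
  obtain ⟨k, hk⟩ : ∃ k : ℕ, k • D = Set.univ :=
    exists_nsmul_eq_univ_of_schnirelmannDensity_pos (by simp [D]) <|
      schnirelmannDensity_pos_of_lowerDensity_pos
        ((Set.subset_insert _ _).trans (Set.subset_insert _ _)) (by simp [D])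
        ((lowerDensity_nonneg _).lt_of_ne' hne)
  have hnonneg : {x : ℤ | 0 ≤ x} = k • ((↑) '' D) := by
    rw [show k • ((↑) '' D : Set ℤ) = (↑) '' (k • D) from
      (Set.image_nsmul (Nat.castAddMonoidHom ℤ) D k).symm, hk, Set.image_univ]
    ext x
    exact ⟨fun hx => ⟨x.toNat, Int.toNat_of_nonneg hx⟩,
      fun ⟨m, hm⟩ => hm ▸ Int.natCast_nonneg m⟩
  let _ := zStructure A
  apply h
  rw [hnonneg, Set.image_insert_eq, Set.image_insert_eq]
  exact (((zStructure_definable₁_natCast_image_sigmaSumN A n).insert (Set.mem_univ _)).insert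
    (Set.mem_univ _)).nsmul (zStructure_definableFun_add A) (Set.mem_univ 0) k
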